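/- Let X be a proper metric space, H a complex Hilbert space, Z a subset of X, and ρ : C₀(X, ℂ) → B(H) a nondegenerate star-algebra homomorphism (nondegenerate meaning the set of vectors ρ(φ)v, for φ ∈ C₀(X, ℂ) and v ∈ H, has dense linear span in H). Call a bounded operator T on H controlled if there is r > 0 such that ρ(φ)Tρ(ψ) = 0 whenever φ, ψ are compactly supported continuous functions on X whose supports are at distance greater than r from each other; call T locally compact if ρ(φ)T and Tρ(φ) are compact for every compactly supported continuous φ; call T pseudolocal if the commutator ρ(φ)T - Tρ(φ) is compact for every compactly supported continuous φ; and call T supported near Z if there is r' > 0 such that ρ(φ)T = 0 = Tρ(φ) whenever φ is compactly supported continuous with dist(supp φ, Z) > r'. Let D*(X) denote the norm closure in B(H) of the set of controlled pseudolocal operators, and let C*(Z ⊆ X) denote the norm closure of the set of controlled locally compact operators supported near Z. Then C*(Z ⊆ X) is a closed two-sided ideal of D*(X): in particular, for every T ∈ D*(X) and S ∈ C*(Z ⊆ X), both TS and ST lie in C*(Z ⊆ X). -/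

import Mathlib

open ZeroAtInfty

/-- The distance between two subsets of a metric space:
`inf {dist a b : a ∈ A, b ∈ B}`. -/
noncomputable def setDist {X : Type*} [MetricSpace X] (A B : Set X) : ℝ :=
  sInf (Set.image2 dist A B)

section Roe

variable {X : Type*} [MetricSpace X] [ProperSpace X]
variable {H : Type*} [NormedAddCommGroup H] [InnerProductSpace ℂ H] [CompleteSpace H]

/-- A bounded operator `T` is *controlled* (has finite propagation) if there is
`r > 0` such that `ρ(φ) T ρ(ψ) = 0` whenever `φ, ψ` are compactly supported
continuous functions whose supports are at distance greater than `r`. -/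
def IsControlled (ρ : C₀(X, ℂ) →⋆ₙₐ[ℂ] (H →L[ℂ] H)) (T : H →L[ℂ] H) : Prop :=
  ∃ r > (0 : ℝ), ∀ φ ψ : C₀(X, ℂ), HasCompactSupport ⇑φ → HasCompactSupport ⇑ψ →
    r < setDist (tsupport ⇑φ) (tsupport ⇑ψ) → ρ φ * T * ρ ψ = 0

/-- A bounded operator `T` is *locally compact* if `ρ(φ) T` and `T ρ(φ)` are
compact for every compactly supported continuous `φ`. -/
def IsLocallyCompactOp (ρ : C₀(X, ℂ) →⋆ₙₐ[ℂ] (H →L[ℂ] H)) (T : H →L[ℂ] H) : Prop :=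
  ∀ φ : C₀(X, ℂ), HasCompactSupport ⇑φ →
    IsCompactOperator ⇑(ρ φ * T) ∧ IsCompactOperator ⇑(T * ρ φ)

/-- A bounded operator `T` is *pseudolocal* if the commutator `ρ(φ) T - T ρ(φ)`
is compact for every compactly supported continuous `φ`. -/
def IsPseudolocal (ρ : C₀(X, ℂ) →⋆ₙₐ[ℂ] (H →L[ℂ] H)) (T : H →L[ℂ] H) : Prop :=
  ∀ φ : C₀(X, ℂ), HasCompactSupport ⇑φ →
    IsCompactOperator ⇑(ρ φ * T - T * ρ φ)

/-- A bounded operator `T` is *supported near `Z`* if there is `r' > 0` such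
that `ρ(φ) T = 0 = T ρ(φ)` whenever `φ` is compactly supported continuous with
`dist (supp φ, Z) > r'`. -/
def IsSupportedNear (ρ : C₀(X, ℂ) →⋆ₙₐ[ℂ] (H →L[ℂ] H)) (Z : Set X)
    (T : H →L[ℂ] H) : Prop :=
  ∃ r' > (0 : ℝ), ∀ φ : C₀(X, ℂ), HasCompactSupport ⇑φ →
    r' < setDist (tsupport ⇑φ) Z → ρ φ * T = 0 ∧ T * ρ φ = 0

/-- The algebra `D*(X)`: the norm closure of the controlled pseudolocal
operators. -/
def structureAlgebra (ρ : C₀(X, ℂ) →⋆ₙₐ[ℂ] (H →L[ℂ] H)) : Set (H →L[ℂ] H) :=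
  closure {T : H →L[ℂ] H | IsControlled ρ T ∧ IsPseudolocal ρ T}

/-- The ideal `C*(Z ⊆ X)`: the norm closure of the controlled locally compact
operators supported near `Z`. -/
def roeIdeal (ρ : C₀(X, ℂ) →⋆ₙₐ[ℂ] (H →L[ℂ] H)) (Z : Set X) : Set (H →L[ℂ] H) :=
  closure {T : H →L[ℂ] H | IsControlled ρ T ∧ IsLocallyCompactOp ρ T ∧
    IsSupportedNear ρ Z T}

end Roe

/-!
A cutoff `χ` equal to `1` on a neighbourhood of `supp ψ` wider than the propagation of `S`
satisfies `S ρ(ψ) = ρ(χ) S ρ(ψ)`: tested against `ρ(φ)` the difference is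
`ρ(φ - φχ) S ρ(ψ) = 0`, and nondegeneracy (with density of compactly supported functions in `C₀`)
lets us drop `ρ(φ)`. Inserting such cutoffs shows that `TS` and `ST` are again controlled and
supported near `Z`, while `ρ(φ) T S = [ρ(φ), T] S + T ρ(φ) S` gives local compactness.
Continuity of multiplication passes all this to the norm closures.
-/

open Metric Set
open scoped CStarAlgebra

section SetDist

variable {X : Type*} [MetricSpace X] {A B : Set X} {a b c : X}

lemma setDist_comm (A B : Set X) : setDist A B = setDist B A := by
  rw [setDist, setDist, ← image2_swap]
  simp only [dist_comm]

lemma setDist_le_dist (ha : a ∈ A) (hb : b ∈ B) : setDist A B ≤ dist a b :=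
  csInf_le ⟨0, by rintro _ ⟨_, _, _, _, rfl⟩; exact dist_nonneg⟩ (mem_image2_of_mem ha hb)

lemma le_setDist (hA : A.Nonempty) (hB : B.Nonempty) {s : ℝ}
    (h : ∀ a ∈ A, ∀ b ∈ B, s ≤ dist a b) : s ≤ setDist A B :=
  le_csInf (hA.image2 hB) (by rintro _ ⟨a, ha, b, hb, rfl⟩; exact h a ha b hb)

lemma nonempty_of_setDist_pos (h : 0 < setDist A B) : A.Nonempty ∧ B.Nonempty := by
  constructor <;> rw [nonempty_iff_ne_empty] <;> rintro rfl <;> simp [setDist] at h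

lemma setDist_sub_le_dist_of_mem_thickening {t : ℝ} (ha : a ∈ A) (hc : c ∈ thickening t B) :
    setDist A B - t ≤ dist a c := by
  obtain ⟨b, hb, hcb⟩ := mem_thickening_iff.mp hc
  linarith [setDist_le_dist ha hb, dist_triangle a c b]

end SetDist

namespace ZeroAtInftyContinuousMap

lemma isCompact_setOf_le_norm {X E : Type*} [TopologicalSpace X] [NormedAddCommGroup E]
    (φ : C₀(X, E)) {ε : ℝ} (hε : 0 < ε) :
    IsCompact {x | ε ≤ ‖φ x‖} := by
  obtain ⟨t, ht, hts⟩ := Filter.mem_cocompact.mp (zero_at_infty φ (ball_mem_nhds 0 hε))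
  refine ht.of_isClosed_subset (isClosed_le continuous_const (map_continuous φ).norm) ?_
  intro x hx
  by_contra hxt
  exact (not_lt.mpr (show ε ≤ ‖φ x‖ from hx)) (by simpa using hts hxt)

variable {X E : Type*} [TopologicalSpace X] [T2Space X] [LocallyCompactSpace X]
  [NormedAddCommGroup E] [NormedSpace ℝ E]

lemma dense_setOf_hasCompactSupport : Dense {φ : C₀(X, E) | HasCompactSupport ⇑φ} := by
  refine Metric.dense_iff.mpr fun φ ε hε => ?_
  obtain ⟨f, hf1, hfc, -, hf01⟩ := exists_continuousMap_one_of_isCompact_subset_isOpen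
    (isCompact_setOf_le_norm φ (half_pos hε)) isOpen_univ (subset_univ _)
  have hψc : HasCompactSupport fun x => f x • φ x := HasCompactSupport.smul_right hfc
  let ψ : C₀(X, E) := ⟨⟨fun x => f x • φ x, by fun_prop⟩, hψc.is_zero_at_infty⟩
  refine ⟨ψ, ?_, hψc⟩
  rw [mem_ball, dist_comm, dist_eq_norm, ← norm_toBCF_eq_norm]
  refine ((BoundedContinuousFunction.norm_le (half_pos hε).le).mpr fun x => ?_).trans_lt
    (half_lt_self hε)
  change ‖φ x - f x • φ x‖ ≤ ε / 2
  by_cases hx : ε / 2 ≤ ‖φ x‖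
  · simpa [hf1 hx] using (half_pos hε).le
  · obtain ⟨h0, h1⟩ := hf01 x
    calc ‖φ x - f x • φ x‖ = |1 - f x| * ‖φ x‖ := by
          rw [← Real.norm_eq_abs, ← norm_smul, sub_smul, one_smul]
      _ ≤ 1 * (ε / 2) := by
          gcongr
          · exact abs_le.mpr ⟨by linarith, by linarith⟩
          · exact (not_le.mp hx).le
      _ = ε / 2 := one_mul _

end ZeroAtInftyContinuousMap

section Operators

variable {X : Type*} [MetricSpace X]
variable {H : Type*} [NormedAddCommGroup H] [InnerProductSpace ℂ H] [CompleteSpace H]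

def IsNondegenerate (ρ : C₀(X, ℂ) →⋆ₙₐ[ℂ] (H →L[ℂ] H)) : Prop :=
  Dense (↑(Submodule.span ℂ {v : H | ∃ (φ : C₀(X, ℂ)) (w : H), ρ φ w = v}) : Set H)

/-- `IsControlled ρ T` unfolds to `∃ r > 0, HasPropagationLE ρ r T`. -/
def HasPropagationLE (ρ : C₀(X, ℂ) →⋆ₙₐ[ℂ] (H →L[ℂ] H)) (r : ℝ) (T : H →L[ℂ] H) : Prop :=
  ∀ φ ψ : C₀(X, ℂ), HasCompactSupport ⇑φ → HasCompactSupport ⇑ψ →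
    r < setDist (tsupport ⇑φ) (tsupport ⇑ψ) → ρ φ * T * ρ ψ = 0

/-- `IsSupportedNear ρ Z T` unfolds to `∃ r > 0, IsSupportedWithin ρ Z r T`. -/
def IsSupportedWithin (ρ : C₀(X, ℂ) →⋆ₙₐ[ℂ] (H →L[ℂ] H)) (Z : Set X) (r : ℝ)
    (T : H →L[ℂ] H) : Prop :=
  ∀ φ : C₀(X, ℂ), HasCompactSupport ⇑φ →
    r < setDist (tsupport ⇑φ) Z → ρ φ * T = 0 ∧ T * ρ φ = 0

variable {ρ : C₀(X, ℂ) →⋆ₙₐ[ℂ] (H →L[ℂ] H)} {Z : Set X} {r r' s : ℝ} {T S : H →L[ℂ] H}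
  {φ ψ χ : C₀(X, ℂ)}

lemma map_eq_zero_of_tsupport_eq_empty (h : tsupport ⇑φ = ∅) : ρ φ = 0 := by
  rw [show φ = 0 from ZeroAtInftyContinuousMap.ext (congrFun (tsupport_eq_empty_iff.mp h)),
    map_zero]

lemma HasPropagationLE.mul_mul_eq_zero (hT : HasPropagationLE ρ r T)
    (hφ : HasCompactSupport ⇑φ) (hψ : HasCompactSupport ⇑ψ) (hrs : r < s)
    (h : ∀ a ∈ tsupport ⇑φ, ∀ b ∈ tsupport ⇑ψ, s ≤ dist a b) : ρ φ * T * ρ ψ = 0 := by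
  rcases (tsupport ⇑φ).eq_empty_or_nonempty with hφ₀ | hφne
  · rw [map_eq_zero_of_tsupport_eq_empty hφ₀, zero_mul, zero_mul]
  rcases (tsupport ⇑ψ).eq_empty_or_nonempty with hψ₀ | hψne
  · rw [map_eq_zero_of_tsupport_eq_empty hψ₀, mul_zero]
  exact hT φ ψ hφ hψ (hrs.trans_le (le_setDist hφne hψne h))

lemma IsSupportedWithin.eq_zero_of_le_dist (hT : IsSupportedWithin ρ Z r T) (hZ : Z.Nonempty)
    (hφ : HasCompactSupport ⇑φ) (hrs : r < s) (h : ∀ a ∈ tsupport ⇑φ, ∀ z ∈ Z, s ≤ dist a z) :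
    ρ φ * T = 0 ∧ T * ρ φ = 0 := by
  rcases (tsupport ⇑φ).eq_empty_or_nonempty with hφ₀ | hφne
  · simp [map_eq_zero_of_tsupport_eq_empty hφ₀]
  exact hT φ hφ (hrs.trans_le (le_setDist hφne hZ h))

lemma hasCompactSupport_sub_mul (hφ : HasCompactSupport ⇑φ) (χ : C₀(X, ℂ)) :
    HasCompactSupport ⇑(φ - φ * χ) := by
  rw [show ⇑(φ - φ * χ) = ⇑φ * (1 - ⇑χ) by ext; simp [mul_sub]]
  exact hφ.mul_right

lemma le_dist_of_mem_tsupport_sub_mul {K : Set X} (hχ : EqOn χ 1 (thickening s K)) {a b : X}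
    (ha : a ∈ tsupport ⇑(φ - φ * χ)) (hb : b ∈ K) : s ≤ dist a b := by
  have hsupp : tsupport ⇑(φ - φ * χ) ⊆ (thickening s K)ᶜ :=
    closure_minimal (fun x hx hxK => hx (by simp [hχ hxK])) isOpen_thickening.isClosed_compl
  exact not_lt.mp fun hab => hsupp ha (mem_thickening_iff.mpr ⟨b, hb, hab⟩)

lemma IsPseudolocal.mul_isLocallyCompactOp (hT : IsPseudolocal ρ T)
    (hS : IsLocallyCompactOp ρ S) : IsLocallyCompactOp ρ (T * S) := fun φ hφ => by
  refine ⟨?_, ?_⟩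
  · rw [show ρ φ * (T * S) = (ρ φ * T - T * ρ φ) * S + T * (ρ φ * S) by noncomm_ring]
    exact ((hT φ hφ).comp_clm S).add ((hS φ hφ).1.clm_comp T)
  · rw [mul_assoc]
    exact (hS φ hφ).2.clm_comp T

lemma IsLocallyCompactOp.mul_isPseudolocal (hS : IsLocallyCompactOp ρ S)
    (hT : IsPseudolocal ρ T) : IsLocallyCompactOp ρ (S * T) := fun φ hφ => by
  refine ⟨?_, ?_⟩
  · rw [← mul_assoc]
    exact (hS φ hφ).1.comp_clm T
  · rw [show S * T * ρ φ = (S * ρ φ) * T - S * (ρ φ * T - T * ρ φ) by noncomm_ring]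
    exact ((hS φ hφ).2.comp_clm T).sub ((hT φ hφ).clm_comp S)

section Proper

variable [ProperSpace X]

lemma IsNondegenerate.eq_zero_of_forall_mul_map_eq_zero (hρ : IsNondegenerate ρ)
    {A : H →L[ℂ] H} (h : ∀ φ : C₀(X, ℂ), HasCompactSupport ⇑φ → A * ρ φ = 0) : A = 0 := by
  have hall : ∀ φ, A * ρ φ = 0 := congrFun <|
    Continuous.ext_on ZeroAtInftyContinuousMap.dense_setOf_hasCompactSupport
      (continuous_const.mul (map_continuous ρ)) continuous_const h
  refine ContinuousLinearMap.ext_on hρ ?_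
  rintro _ ⟨φ, w, rfl⟩
  exact congr($(hall φ) w)

lemma IsNondegenerate.eq_zero_of_forall_map_mul_eq_zero (hρ : IsNondegenerate ρ)
    {A : H →L[ℂ] H} (h : ∀ φ : C₀(X, ℂ), HasCompactSupport ⇑φ → ρ φ * A = 0) : A = 0 := by
  refine star_eq_zero.mp (hρ.eq_zero_of_forall_mul_map_eq_zero fun φ hφ => ?_)
  have hφ' : HasCompactSupport ⇑(star φ) := hφ.comp_left (g := star) (star_zero ℂ)
  rw [← star_star (ρ φ), ← map_star, ← star_mul, h _ hφ', star_zero]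

lemma exists_cutoff_thickening {K : Set X} (hK : IsCompact K) {t : ℝ}
    (ht : 0 < t) (hst : s < t) :
    ∃ χ : C₀(X, ℂ), HasCompactSupport ⇑χ ∧ EqOn χ 1 (thickening s K) ∧
      tsupport ⇑χ ⊆ thickening t K := by
  obtain ⟨f, hf1, hfc, hft, -⟩ := exists_continuousMap_one_of_isCompact_subset_isOpen
    hK.cthickening isOpen_thickening (cthickening_subset_thickening' ht hst K)
  have hχc : HasCompactSupport fun x => (f x : ℂ) :=
    HasCompactSupport.comp_left hfc Complex.ofReal_zero
  refine ⟨⟨⟨fun x => (f x : ℂ), by fun_prop⟩, hχc.is_zero_at_infty⟩, hχc, fun x hx => ?_,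
    (tsupport_comp_subset Complex.ofReal_zero f).trans hft⟩
  simp [hf1 (thickening_subset_cthickening s K hx)]

lemma HasPropagationLE.mul_eq_map_mul (hρ : IsNondegenerate ρ) (hT : HasPropagationLE ρ r T)
    (hψ : HasCompactSupport ⇑ψ) (hrs : r < s) (hχ : EqOn χ 1 (thickening s (tsupport ⇑ψ))) :
    T * ρ ψ = ρ χ * (T * ρ ψ) := by
  refine sub_eq_zero.mp (hρ.eq_zero_of_forall_map_mul_eq_zero fun φ hφ => ?_)
  calc ρ φ * (T * ρ ψ - ρ χ * (T * ρ ψ)) = ρ (φ - φ * χ) * T * ρ ψ := by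
        rw [map_sub, map_mul]; noncomm_ring
    _ = 0 := hT.mul_mul_eq_zero (hasCompactSupport_sub_mul hφ χ) hψ hrs
        fun _ ha _ hb => le_dist_of_mem_tsupport_sub_mul hχ ha hb

lemma HasPropagationLE.map_mul_eq_mul_map (hρ : IsNondegenerate ρ)
    (hT : HasPropagationLE ρ r T) (hψ : HasCompactSupport ⇑ψ) (hrs : r < s)
    (hχ : EqOn χ 1 (thickening s (tsupport ⇑ψ))) :
    ρ ψ * T = ρ ψ * T * ρ χ := by
  refine sub_eq_zero.mp (hρ.eq_zero_of_forall_mul_map_eq_zero fun φ hφ => ?_)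
  have hcomm : ρ χ * ρ φ = ρ φ * ρ χ := by rw [← map_mul, mul_comm, map_mul]
  calc (ρ ψ * T - ρ ψ * T * ρ χ) * ρ φ = ρ ψ * T * ρ (φ - φ * χ) := by
        rw [map_sub, map_mul, ← hcomm]; noncomm_ring
    _ = 0 := hT.mul_mul_eq_zero hψ (hasCompactSupport_sub_mul hφ χ) hrs
        fun _ ha _ hb => (le_dist_of_mem_tsupport_sub_mul hχ hb ha).trans_eq (dist_comm _ _)

lemma HasPropagationLE.mul (hρ : IsNondegenerate ρ) (hT : HasPropagationLE ρ r T)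
    (hS : HasPropagationLE ρ r' S) (hr' : 0 ≤ r') : HasPropagationLE ρ (r + r' + 2) (T * S) := by
  intro φ ψ hφ hψ hd
  obtain ⟨χ, hχc, hχ1, hχs⟩ :=
    exists_cutoff_thickening hψ (s := r' + 1) (t := r' + 2) (by linarith) (by linarith)
  have hTχ : ρ φ * T * ρ χ = 0 :=
    hT.mul_mul_eq_zero hφ hχc (s := setDist (tsupport ⇑φ) (tsupport ⇑ψ) - (r' + 2))
      (by linarith) fun _ ha _ hc => setDist_sub_le_dist_of_mem_thickening ha (hχs hc)
  calc ρ φ * (T * S) * ρ ψ = ρ φ * T * (S * ρ ψ) := by noncomm_ring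
    _ = ρ φ * T * ρ χ * (S * ρ ψ) := by
        rw [mul_assoc (ρ φ * T), ← hS.mul_eq_map_mul hρ hψ (lt_add_one r') hχ1]
    _ = 0 := by rw [hTχ, zero_mul]

lemma HasPropagationLE.mul_isSupportedWithin (hρ : IsNondegenerate ρ)
    (hT : HasPropagationLE ρ r T) (hr : 0 ≤ r) (hS : IsSupportedWithin ρ Z r' S) (hr' : 0 ≤ r') :
    IsSupportedWithin ρ Z (r + r' + 2) (T * S) := by
  intro φ hφ hd
  obtain ⟨-, hZ⟩ := nonempty_of_setDist_pos (by linarith : 0 < setDist (tsupport ⇑φ) Z)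
  obtain ⟨η, hηc, hη1, hηs⟩ :=
    exists_cutoff_thickening hφ (s := r + 1) (t := r + 2) (by linarith) (by linarith)
  have hηS : ρ η * S = 0 := by
    refine (hS.eq_zero_of_le_dist hZ hηc (s := setDist (tsupport ⇑φ) Z - (r + 2)) (by linarith)
      fun c hc z hz => ?_).1
    rw [setDist_comm, dist_comm]
    exact setDist_sub_le_dist_of_mem_thickening hz (hηs hc)
  refine ⟨?_, ?_⟩
  · rw [← mul_assoc, hT.map_mul_eq_mul_map hρ hφ (lt_add_one r) hη1, mul_assoc _ (ρ η), hηS,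
      mul_zero]
  · rw [mul_assoc, (hS φ hφ (by linarith)).2, mul_zero]

lemma IsSupportedWithin.mul_hasPropagationLE (hρ : IsNondegenerate ρ)
    (hS : IsSupportedWithin ρ Z r' S) (hr' : 0 ≤ r') (hT : HasPropagationLE ρ r T) (hr : 0 ≤ r) :
    IsSupportedWithin ρ Z (r + r' + 2) (S * T) := by
  intro φ hφ hd
  obtain ⟨-, hZ⟩ := nonempty_of_setDist_pos (by linarith : 0 < setDist (tsupport ⇑φ) Z)
  obtain ⟨η, hηc, hη1, hηs⟩ :=
    exists_cutoff_thickening hφ (s := r + 1) (t := r + 2) (by linarith) (by linarith)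
  have hSη : S * ρ η = 0 := by
    refine (hS.eq_zero_of_le_dist hZ hηc (s := setDist (tsupport ⇑φ) Z - (r + 2)) (by linarith)
      fun c hc z hz => ?_).2
    rw [setDist_comm, dist_comm]
    exact setDist_sub_le_dist_of_mem_thickening hz (hηs hc)
  refine ⟨?_, ?_⟩
  · rw [← mul_assoc, (hS φ hφ (by linarith)).1, zero_mul]
  · rw [mul_assoc, hT.mul_eq_map_mul hρ hφ (lt_add_one r) hη1, ← mul_assoc, hSη, zero_mul]

lemma IsControlled.mul (hρ : IsNondegenerate ρ) (hT : IsControlled ρ T)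
    (hS : IsControlled ρ S) : IsControlled ρ (T * S) := by
  obtain ⟨r, hr, hT⟩ := hT
  obtain ⟨r', hr', hS⟩ := hS
  exact ⟨r + r' + 2, by positivity, HasPropagationLE.mul hρ hT hS hr'.le⟩

lemma IsControlled.mul_isSupportedNear (hρ : IsNondegenerate ρ) (hT : IsControlled ρ T)
    (hS : IsSupportedNear ρ Z S) : IsSupportedNear ρ Z (T * S) := by
  obtain ⟨r, hr, hT⟩ := hT
  obtain ⟨r', hr', hS⟩ := hS
  exact ⟨r + r' + 2, by positivity, HasPropagationLE.mul_isSupportedWithin hρ hT hr.le hS hr'.le⟩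

lemma IsSupportedNear.mul_isControlled (hρ : IsNondegenerate ρ) (hS : IsSupportedNear ρ Z S)
    (hT : IsControlled ρ T) : IsSupportedNear ρ Z (S * T) := by
  obtain ⟨r, hr, hT⟩ := hT
  obtain ⟨r', hr', hS⟩ := hS
  exact ⟨r + r' + 2, by positivity, IsSupportedWithin.mul_hasPropagationLE hρ hS hr'.le hT hr.le⟩

end Proper

end Operators

/-- `C*(Z ⊆ X)` is a closed two-sided ideal in `D*(X)`: it is
norm-closed, and for `T ∈ D*(X)` and `S ∈ C*(Z ⊆ X)` both `T * S` and `S * T`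
lie in `C*(Z ⊆ X)`. -/
theorem statement12 {X : Type*} [MetricSpace X] [ProperSpace X]
    {H : Type*} [NormedAddCommGroup H] [InnerProductSpace ℂ H] [CompleteSpace H]
    (Z : Set X) (ρ : C₀(X, ℂ) →⋆ₙₐ[ℂ] (H →L[ℂ] H))
    (hρ : Dense (↑(Submodule.span ℂ
      {v : H | ∃ (φ : C₀(X, ℂ)) (w : H), ρ φ w = v}) : Set H)) :
    IsClosed (roeIdeal ρ Z) ∧
      ∀ T ∈ structureAlgebra ρ, ∀ S ∈ roeIdeal ρ Z,
        T * S ∈ roeIdeal ρ Z ∧ S * T ∈ roeIdeal ρ Z := by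
  refine ⟨isClosed_closure, fun T hT S hS =>
    ⟨map_mem_closure₂ continuous_mul hT hS ?_, map_mem_closure₂ continuous_mul hS hT ?_⟩⟩
  · rintro T ⟨hTc, hTp⟩ S ⟨hSc, hSl, hSn⟩
    exact ⟨hTc.mul hρ hSc, hTp.mul_isLocallyCompactOp hSl, hTc.mul_isSupportedNear hρ hSn⟩
  · rintro S ⟨hSc, hSl, hSn⟩ T ⟨hTc, hTp⟩
    exact ⟨hSc.mul hρ hTc, hSl.mul_isPseudolocal hTp, hSn.mul_isControlled hρ hTc⟩
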